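/- arXiv:1812.08476 — 8 statements merged into one kernel-verified Lean document; each statement's English description precedes it below -/
import Mathlib

section
/- Let k be an algebraically closed field of characteristic zero, let q be a nondegenerate quadratic form on k^4, and let L1, L2, L3, L4 be 2-dimensional linear subspaces of k^4 that pairwise intersect in the zero subspace and on each of which q vanishes identically. Then the set of 2-dimensional linear subspaces W of k^4 satisfying W ∩ Li ≠ 0 for all i = 1,2,3,4 is infinite. -/
/-!
Since `L₁ ⊕ L₂ = k⁴` and `L₁, L₂` are totally isotropic, the polar form of `q` identifies `L₁`
with the dual of `L₂`. A line `L` skew to `L₁` is the graph over `L₂` of minus the projection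
`P_L` onto `L₁` along `L`, and isotropy of `L` says `(f, g) ↦ polar q g (P_L f)` is an
alternating form on `L₂`. Alternating forms on a plane form a line, so `P₄ = c • P₃` on `L₂`.
Hence for every `y ∈ L₂ \ 0` the plane spanned by `P₃ y ∈ L₁` and `y ∈ L₂` also contains
`y - P₃ y ∈ L₃` and `y - P₄ y ∈ L₄`; it meets `L₂` exactly in `k y`, so distinct lines `k y`
give distinct transversals.
-/

open Module Submodule QuadraticMap

section

variable {k V : Type*} [Field k] [AddCommGroup V] [Module k V]

namespace Submodule

variable {L L' : Submodule k V} {x y : V}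

theorem sub_projection_apply_mem (h : IsCompl L L') (x : V) :
    x - L.projection L' h x ∈ L' :=
  projection_eq_self_sub_projection h x ▸ projection_apply_mem _ x

theorem inf_ne_bot_of_mem (hL : x ∈ L) (hL' : x ∈ L') (hx : x ≠ 0) : L ⊓ L' ≠ ⊥ :=
  (Submodule.ne_bot_iff _).2 ⟨x, ⟨hL, hL'⟩, hx⟩

theorem sub_ne_zero_of_inf_eq_bot (h : L ⊓ L' = ⊥) (hx : x ∈ L) (hy : y ∈ L') (hy0 : y ≠ 0) :
    y - x ≠ 0 := by
  rw [sub_ne_zero]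
  rintro rfl
  exact hy0 ((mem_bot k).1 (h ▸ mem_inf.2 ⟨hx, hy⟩))

theorem linearIndependent_pair_of_inf_eq_bot (h : L ⊓ L' = ⊥) (hx : x ∈ L) (hy : y ∈ L')
    (hx0 : x ≠ 0) (hy0 : y ≠ 0) : LinearIndependent k ![x, y] := by
  refine LinearIndependent.pair_iff.2 fun s t hst => ?_
  have hsx : s • x = 0 := by
    refine (mem_bot k).1 (h ▸ mem_inf.2 ⟨L.smul_mem s hx, ?_⟩)
    rw [eq_neg_of_add_eq_zero_left hst]
    exact L'.neg_mem (L'.smul_mem t hy)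
  rw [hsx, zero_add] at hst
  exact ⟨(smul_eq_zero.1 hsx).resolve_right hx0, (smul_eq_zero.1 hst).resolve_right hy0⟩

theorem finrank_span_pair_of_inf_eq_bot (h : L ⊓ L' = ⊥) (hx : x ∈ L) (hy : y ∈ L')
    (hx0 : x ≠ 0) (hy0 : y ≠ 0) : finrank k (span k {x, y}) = 2 := by
  rw [← Matrix.range_cons_cons_empty x y ![]]
  simpa using finrank_span_eq_card (linearIndependent_pair_of_inf_eq_bot h hx hy hx0 hy0)

theorem span_pair_inf_eq_span_singleton (h : L ⊓ L' = ⊥) (hx : x ∈ L) (hy : y ∈ L') :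
    span k {x, y} ⊓ L' = span k {y} := by
  refine le_antisymm (fun z ⟨hz, hzL'⟩ => ?_)
    (le_inf (span_mono (by simp)) ((span_singleton_le_iff_mem _ _).2 hy))
  obtain ⟨a, b, rfl⟩ := mem_span_pair.1 hz
  have hax : a • x = 0 := by
    refine (mem_bot k).1 (h ▸ mem_inf.2 ⟨L.smul_mem a hx, ?_⟩)
    rw [← add_sub_cancel_right (a • x) (b • y)]
    exact L'.sub_mem hzL' (L'.smul_mem b hy)
  rw [hax, zero_add]
  exact smul_mem _ b (mem_span_singleton_self y)

theorem injective_span_singleton_add_smul {u v : V} (huv : LinearIndependent k ![u, v]) :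
    Function.Injective fun t : k => span k {u + t • v} := by
  intro t s (hts : span k {u + t • v} = span k {u + s • v})
  obtain ⟨a, ha⟩ := mem_span_singleton.1 (hts ▸ mem_span_singleton_self (u + t • v))
  obtain ⟨ha1, has⟩ := LinearIndependent.pair_iff.1 huv (a - 1) (a * s - t) (by
    rw [← sub_eq_zero] at ha
    rw [← ha]; module)
  rw [sub_eq_zero] at ha1 has
  rw [← has, ha1, one_mul]

theorem exists_linearIndependent_pair_of_finrank_eq_two (h2 : finrank k L = 2) :
    ∃ u ∈ L, ∃ v ∈ L, LinearIndependent k ![u, v] := by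
  have : Module.Finite k L := Module.finite_of_finrank_eq_succ h2
  let b := finBasisOfFinrankEq k L h2
  refine ⟨b 0, (b 0).2, b 1, (b 1).2, ?_⟩
  have := b.linearIndependent.map' L.subtype L.ker_subtype
  rwa [show L.subtype ∘ b = ![(b 0 : V), b 1] from funext fun i => by fin_cases i <;> rfl] at this

theorem infinite_setOf_eq_span_pair [Infinite k] (h : L ⊓ L' = ⊥) (h2 : finrank k L' = 2)
    {P : V →ₗ[k] V} (hP : ∀ v, P v ∈ L) :
    {W : Submodule k V | ∃ y ∈ L', y ≠ 0 ∧ W = span k {P y, y}}.Infinite := by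
  obtain ⟨u, hu, v, hv, huv⟩ := exists_linearIndependent_pair_of_finrank_eq_two h2
  have hy (t : k) : u + t • v ∈ L' := L'.add_mem hu (L'.smul_mem t hv)
  refine Set.infinite_of_injective_forall_mem
    (f := fun t => span k {P (u + t • v), u + t • v}) (fun t s hts => ?_)
    fun t => ⟨_, hy t, fun h0 => ?_, rfl⟩
  · refine injective_span_singleton_add_smul huv ?_
    simpa only [span_pair_inf_eq_span_singleton h (hP _) (hy _)] using congrArg (· ⊓ L') hts
  · exact one_ne_zero (LinearIndependent.pair_iff.1 huv 1 t (by simpa using h0)).1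

end Submodule

namespace LinearMap.BilinForm.IsAlt

variable {M : Type*} [AddCommGroup M] [Module k M] {β γ : LinearMap.BilinForm k M}

theorem eq_zero_of_basis_fin_two (hβ : β.IsAlt) (b : Basis (Fin 2) k M)
    (h : β (b 0) (b 1) = 0) : β = 0 := by
  have h' : β (b 1) (b 0) = 0 := by rw [← hβ.neg_eq, h, neg_zero]
  refine b.ext fun i => b.ext fun j => ?_
  fin_cases i <;> fin_cases j <;> simp [hβ.self_eq_zero, h, h']

theorem exists_eq_smul_of_finrank_eq_two (h2 : finrank k M = 2) (hβ : β.IsAlt)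
    (hγ : γ.IsAlt) (hγ0 : γ ≠ 0) : ∃ c : k, β = c • γ := by
  have : Module.Finite k M := Module.finite_of_finrank_eq_succ h2
  let b := finBasisOfFinrankEq k M h2
  have hγb : γ (b 0) (b 1) ≠ 0 := fun h => hγ0 (hγ.eq_zero_of_basis_fin_two b h)
  set c := β (b 0) (b 1) / γ (b 0) (b 1)
  refine ⟨c, sub_eq_zero.1 <| (hβ.sub (hγ.smul c)).eq_zero_of_basis_fin_two b ?_⟩
  simp [c, div_mul_cancel₀ _ hγb]

end LinearMap.BilinForm.IsAlt

section QuadraticForm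

variable {q : QuadraticForm k V} {L M L' : Submodule k V} {x y : V}

theorem QuadraticMap.polar_eq_zero_of_map_sub_eq_zero (hx : q x = 0) (hy : q y = 0)
    (hxy : q (x - y) = 0) : polar q x y = 0 := by
  have := polar_neg_right q x y
  rw [polar, ← sub_eq_add_neg, hxy, hx, QuadraticMap.map_neg, hy] at this
  simpa using this.symm

theorem QuadraticMap.polar_eq_zero_of_mem (hL : ∀ v ∈ L, q v = 0) (hx : x ∈ L) (hy : y ∈ L) :
    polar q x y = 0 :=
  polar_eq_zero_of_map_sub_eq_zero (hL x hx) (hL y hy) (hL _ (L.sub_mem hx hy))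

theorem QuadraticMap.polar_projection_eq_zero (hLM : IsCompl L M) (hL : ∀ v ∈ L, q v = 0)
    (hM : ∀ v ∈ M, q v = 0) (hL' : ∀ v ∈ L', q v = 0) (hx : x ∈ L') :
    polar q x (L.projection M hLM x) = 0 :=
  polar_eq_zero_of_map_sub_eq_zero (hL' x hx) (hL _ (projection_apply_mem hLM x))
    (hM _ (sub_projection_apply_mem hLM x))

theorem QuadraticMap.eq_zero_of_polar_eq_zero (hq : (polarBilin q).SeparatingLeft)
    (hL : ∀ v ∈ L, q v = 0) (hLL' : L ⊔ L' = ⊤) (hx : x ∈ L) (h : ∀ y ∈ L', polar q x y = 0) :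
    x = 0 := by
  refine hq x fun z => ?_
  obtain ⟨y, hy, y', hy', rfl⟩ := mem_sup.1 (hLL' ▸ mem_top : z ∈ L ⊔ L')
  simp [polar_add_right, polar_eq_zero_of_mem hL hx hy, h y' hy']

theorem QuadraticMap.exists_forall_eq_smul_of_polar_eq_zero (hq : (polarBilin q).SeparatingLeft)
    (hL : ∀ v ∈ L, q v = 0) (hLL' : L ⊔ L' = ⊤) (h2 : finrank k L' = 2)
    {P P' : V →ₗ[k] V} (hP : ∀ v, P v ∈ L) (hP' : ∀ v, P' v ∈ L)
    (hPalt : ∀ f ∈ L', polar q f (P f) = 0) (hP'alt : ∀ f ∈ L', polar q f (P' f) = 0)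
    (hP0 : ∃ f ∈ L', P f ≠ 0) : ∃ c : k, ∀ f ∈ L', P' f = c • P f := by
  let form (P : V →ₗ[k] V) : LinearMap.BilinForm k L' :=
    (polarBilin q).compl₁₂ L'.subtype (P ∘ₗ L'.subtype)
  obtain ⟨f₀, hf₀, hPf₀⟩ := hP0
  have hform0 : form P ≠ 0 := fun h0 => hPf₀ <|
    eq_zero_of_polar_eq_zero hq hL hLL' (hP f₀) fun y hy => by
      rw [polar_comm]; exact LinearMap.congr_fun₂ h0 ⟨y, hy⟩ ⟨f₀, hf₀⟩
  obtain ⟨c, hc⟩ := LinearMap.BilinForm.IsAlt.exists_eq_smul_of_finrank_eq_two h2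
    (β := form P') (fun f => hP'alt f f.2) (fun f => hPalt f f.2) hform0
  refine ⟨c, fun f hf => sub_eq_zero.1 ?_⟩
  refine eq_zero_of_polar_eq_zero hq hL hLL' (L.sub_mem (hP' f) (L.smul_mem c (hP f)))
    fun y hy => ?_
  have : polar q y (P' f) = c * polar q y (P f) := LinearMap.congr_fun₂ hc ⟨y, hy⟩ ⟨f, hf⟩
  rw [polar_comm, polar_sub_right, polar_smul_right, this]
  simp

end QuadraticForm

end

theorem stmt0_general
    (k : Type*) [Field k] [CharZero k]
    (q : QuadraticForm k (Fin 4 → k))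
    (hq : (QuadraticMap.polarBilin q).Nondegenerate)
    (L1 L2 L3 L4 : Submodule k (Fin 4 → k))
    (h1 : Module.finrank k L1 = 2) (h2 : Module.finrank k L2 = 2)
    (h3 : Module.finrank k L3 = 2) (h4 : Module.finrank k L4 = 2)
    (h12 : L1 ⊓ L2 = ⊥) (h13 : L1 ⊓ L3 = ⊥) (h14 : L1 ⊓ L4 = ⊥)
    (h23 : L2 ⊓ L3 = ⊥)
    (hv1 : ∀ v ∈ L1, q v = 0) (hv2 : ∀ v ∈ L2, q v = 0)
    (hv3 : ∀ v ∈ L3, q v = 0) (hv4 : ∀ v ∈ L4, q v = 0) :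
    {W : Submodule k (Fin 4 → k) | Module.finrank k W = 2 ∧
      W ⊓ L1 ≠ ⊥ ∧ W ⊓ L2 ≠ ⊥ ∧ W ⊓ L3 ≠ ⊥ ∧ W ⊓ L4 ≠ ⊥}.Infinite := by
  have hcompl {M : Submodule k (Fin 4 → k)} (hM : finrank k M = 2) (h : L1 ⊓ M = ⊥) :
      IsCompl L1 M :=
    (isCompl_iff_disjoint _ _ (by simp [h1, hM])).2 (disjoint_iff.2 h)
  set P3 := L1.projection L3 (hcompl h3 h13)
  set P4 := L1.projection L4 (hcompl h4 h14)
  have hP3 {y} (hy : y ∈ L2) (hy0 : y ≠ 0) : P3 y ≠ 0 := fun h => hy0 <| (mem_bot k).1 <|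
    h23 ▸ mem_inf.2 ⟨hy, (projection_apply_eq_zero_iff _).1 h⟩
  obtain ⟨y₀, hy₀, hy₀0⟩ := (Submodule.ne_bot_iff L2).1 fun h => by
    rw [← Submodule.finrank_eq_zero, h2] at h; exact two_ne_zero h
  obtain ⟨c, hc⟩ := exists_forall_eq_smul_of_polar_eq_zero (P := P3) (P' := P4) hq.1 hv1
    (hcompl h2 h12).sup_eq_top h2 (projection_apply_mem _) (projection_apply_mem _)
    (fun f hf => polar_projection_eq_zero _ hv1 hv3 hv2 hf)
    (fun f hf => polar_projection_eq_zero _ hv1 hv4 hv2 hf) ⟨y₀, hy₀, hP3 hy₀ hy₀0⟩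
  refine (infinite_setOf_eq_span_pair (P := P3) h12 h2 (projection_apply_mem _)).mono ?_
  rintro _ ⟨y, hy, hy0, rfl⟩
  set W := span k {P3 y, y}
  have hxW : P3 y ∈ W := subset_span (by simp)
  have hyW : y ∈ W := subset_span (by simp)
  have hP3y := projection_apply_mem (hcompl h3 h13) y
  refine ⟨finrank_span_pair_of_inf_eq_bot h12 hP3y hy (hP3 hy hy0) hy0,
    inf_ne_bot_of_mem hxW hP3y (hP3 hy hy0), inf_ne_bot_of_mem hyW hy hy0,
    inf_ne_bot_of_mem (W.sub_mem hyW hxW) (sub_projection_apply_mem _ _)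
      (sub_ne_zero_of_inf_eq_bot h12 hP3y hy hy0),
    inf_ne_bot_of_mem (W.sub_mem hyW (hc _ hy ▸ W.smul_mem c hxW)) (sub_projection_apply_mem _ _)
      (sub_ne_zero_of_inf_eq_bot h12 (projection_apply_mem _ _) hy hy0)⟩

/-- Four pairwise skew lines on a smooth quadric surface in P^3 (over an algebraically
closed field of characteristic zero) have infinitely many common transversals:
stated linearly in terms of 2-dimensional subspaces of k^4. -/
theorem stmt0
    (k : Type*) [Field k] [IsAlgClosed k] [CharZero k]
    (q : QuadraticForm k (Fin 4 → k))
    (hq : (QuadraticMap.polarBilin q).Nondegenerate)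
    (L1 L2 L3 L4 : Submodule k (Fin 4 → k))
    (h1 : Module.finrank k L1 = 2) (h2 : Module.finrank k L2 = 2)
    (h3 : Module.finrank k L3 = 2) (h4 : Module.finrank k L4 = 2)
    (h12 : L1 ⊓ L2 = ⊥) (h13 : L1 ⊓ L3 = ⊥) (h14 : L1 ⊓ L4 = ⊥)
    (h23 : L2 ⊓ L3 = ⊥) (h24 : L2 ⊓ L4 = ⊥) (h34 : L3 ⊓ L4 = ⊥)
    (hv1 : ∀ v ∈ L1, q v = 0) (hv2 : ∀ v ∈ L2, q v = 0)
    (hv3 : ∀ v ∈ L3, q v = 0) (hv4 : ∀ v ∈ L4, q v = 0) :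
    {W : Submodule k (Fin 4 → k) | Module.finrank k W = 2 ∧
      W ⊓ L1 ≠ ⊥ ∧ W ⊓ L2 ≠ ⊥ ∧ W ⊓ L3 ≠ ⊥ ∧ W ⊓ L4 ≠ ⊥}.Infinite :=
  stmt0_general k q hq L1 L2 L3 L4 h1 h2 h3 h4 h12 h13 h14 h23 hv1 hv2 hv3 hv4
end

section
/- Let k be an infinite field and let L1, L2, L3, L4 be 2-dimensional linear subspaces of k^4 such that dim(L1 ∩ L2) = 1, dim(L3 ∩ L4) = 1, and L1 ∩ L2 ⊆ L3 + L4. Then the set of 2-dimensional linear subspaces W of k^4 with W ∩ Li ≠ 0 for all i = 1,2,3,4 is infinite. -/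
/-!
The point `p` spanning `L1 ⊓ L2` lies in the plane `P = L3 ⊔ L4`, which has dimension 3.
Every line `W` through `p` inside `P` meets `L1` and `L2` at `p`, and meets `L3` and `L4`
because two 2-dimensional subspaces of a 3-dimensional space intersect nontrivially. Completing
`p` to a basis `p, q₁, q₂` of `P`, the lines `span {p, q₁ + t • q₂}`, `t ∈ k`, are pairwise
distinct, so over an infinite field there are infinitely many of them.
-/

open Module Submodule

theorem Submodule.inf_ne_bot_of_finrank_lt_add {K V : Type*} [DivisionRing K] [AddCommGroup V]
    [Module K V] [FiniteDimensional K V] {P s t : Submodule K V} (hs : s ≤ P) (ht : t ≤ P)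
    (h : finrank K P < finrank K s + finrank K t) : s ⊓ t ≠ ⊥ := by
  intro hbot
  have hsum := finrank_sup_add_finrank_inf_eq s t
  rw [hbot, finrank_bot] at hsum
  have := Submodule.finrank_mono (sup_le hs ht)
  omega

section

variable {K V : Type*} [Field K] [AddCommGroup V] [Module K V]

theorem LinearIndependent.triple_iff {u v w : V} :
    LinearIndependent K ![u, v, w] ↔
      ∀ a b c : K, a • u + b • v + c • w = 0 → a = 0 ∧ b = 0 ∧ c = 0 := by
  rw [Fintype.linearIndependent_iff]
  refine ⟨fun h a b c habc ↦ ?_, fun h g hg ↦ ?_⟩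
  · have := h ![a, b, c] (by simpa [Fin.sum_univ_three, add_assoc] using habc)
    exact ⟨this 0, this 1, this 2⟩
  · rw [Fin.sum_univ_three] at hg
    obtain ⟨h0, h1, h2⟩ := h _ _ _ (by simpa using hg)
    intro i
    fin_cases i <;> assumption

section

variable {u v w : V} (h : LinearIndependent K ![u, v, w])
include h

theorem LinearIndependent.finrank_span_pair_add_smul (t : K) :
    finrank K (span K {w, u + t • v}) = 2 := by
  have hpair : LinearIndependent K ![w, u + t • v] := by
    refine LinearIndependent.pair_iff.mpr fun a b hab ↦ ?_
    obtain ⟨hb, -, ha⟩ := LinearIndependent.triple_iff.mp h b (b * t) a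
      (by linear_combination (norm := module) hab)
    exact ⟨ha, hb⟩
  rw [← Matrix.range_cons_cons_empty w (u + t • v) ![], finrank_span_eq_card hpair,
    Fintype.card_fin]

theorem LinearIndependent.injective_span_pair_add_smul :
    Function.Injective fun t : K ↦ span K {w, u + t • v} := by
  intro s t hst
  have hmem : u + s • v ∈ span K {w, u + t • v} := by
    rw [← show span K {w, u + s • v} = span K {w, u + t • v} from hst]
    exact subset_span (by simp)
  obtain ⟨a, b, hab⟩ := mem_span_pair.mp hmem
  obtain ⟨hb, hc, -⟩ := LinearIndependent.triple_iff.mp h (b - 1) (b * t - s) a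
    (by linear_combination (norm := module) hab)
  linear_combination -hc + t * hb

end

theorem Submodule.setOf_finrank_two_mem_le_infinite [Infinite K] {P : Submodule K V}
    (hP : finrank K P = 3) {p : V} (hpP : p ∈ P) (hp : p ≠ 0) :
    {W : Submodule K V | finrank K W = 2 ∧ p ∈ W ∧ W ≤ P}.Infinite := by
  have hp' : LinearIndependent K ![(⟨p, hpP⟩ : P)] :=
    linearIndependent_unique_iff.mpr (by simpa using hp)
  obtain ⟨q₁, hq₁⟩ := exists_linearIndependent_cons_of_lt_finrank hp' (by omega)
  obtain ⟨q₂, hq₂⟩ := exists_linearIndependent_cons_of_lt_finrank hq₁ (by omega)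
  have h : LinearIndependent K ![(q₂ : V), q₁, p] := by
    have h := hq₂.map' P.subtype P.ker_subtype
    rwa [show P.subtype ∘ _ = ![(q₂ : V), q₁, p] by ext i; fin_cases i <;> rfl] at h
  refine Set.infinite_of_injective_forall_mem h.injective_span_pair_add_smul fun t ↦
    ⟨h.finrank_span_pair_add_smul t, subset_span (by simp), span_le.mpr ?_⟩
  rintro x (rfl | rfl)
  exacts [hpP, P.add_mem q₂.2 (P.smul_mem t q₁.2)]

end

theorem stmt1_general
    (k : Type*) [Field k] [Infinite k]
    (L1 L2 L3 L4 : Submodule k (Fin 4 → k))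
    (h3 : Module.finrank k L3 = 2) (h4 : Module.finrank k L4 = 2)
    (h12 : Module.finrank k ↥(L1 ⊓ L2) = 1)
    (h34 : Module.finrank k ↥(L3 ⊓ L4) = 1)
    (hspan : L1 ⊓ L2 ≤ L3 ⊔ L4) :
    {W : Submodule k (Fin 4 → k) | Module.finrank k W = 2 ∧
      W ⊓ L1 ≠ ⊥ ∧ W ⊓ L2 ≠ ⊥ ∧ W ⊓ L3 ≠ ⊥ ∧ W ⊓ L4 ≠ ⊥}.Infinite := by
  obtain ⟨p, hp12, hp⟩ := exists_mem_ne_zero_of_ne_bot (one_le_finrank_iff.mp h12.ge)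
  have hP : finrank k ↥(L3 ⊔ L4) = 3 := by
    have := finrank_sup_add_finrank_inf_eq L3 L4
    omega
  refine (setOf_finrank_two_mem_le_infinite hP (hspan hp12) hp).mono ?_
  rintro W ⟨hW, hpW, hWP⟩
  have through_p : ∀ L, p ∈ L → W ⊓ L ≠ ⊥ := fun L hpL ↦
    (Submodule.ne_bot_iff _).mpr ⟨p, ⟨hpW, hpL⟩, hp⟩
  have in_plane : ∀ L : Submodule k (Fin 4 → k), finrank k L = 2 → L ≤ L3 ⊔ L4 → W ⊓ L ≠ ⊥ :=
    fun L hL hLP ↦ inf_ne_bot_of_finrank_lt_add hWP hLP (by omega)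
  exact ⟨hW, through_p L1 hp12.1, through_p L2 hp12.2, in_plane L3 h3 le_sup_left,
    in_plane L4 h4 le_sup_right⟩

/-- Two pairs of intersecting lines in P^3, where the intersection point of the first
pair lies in the plane spanned by the second pair, have infinitely many common
transversals: stated linearly in terms of 2-dimensional subspaces of k^4. -/
theorem stmt1
    (k : Type*) [Field k] [Infinite k]
    (L1 L2 L3 L4 : Submodule k (Fin 4 → k))
    (h1 : Module.finrank k L1 = 2) (h2 : Module.finrank k L2 = 2)
    (h3 : Module.finrank k L3 = 2) (h4 : Module.finrank k L4 = 2)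
    (h12 : Module.finrank k ↥(L1 ⊓ L2) = 1)
    (h34 : Module.finrank k ↥(L3 ⊓ L4) = 1)
    (hspan : L1 ⊓ L2 ≤ L3 ⊔ L4) :
    {W : Submodule k (Fin 4 → k) | Module.finrank k W = 2 ∧
      W ⊓ L1 ≠ ⊥ ∧ W ⊓ L2 ≠ ⊥ ∧ W ⊓ L3 ≠ ⊥ ∧ W ⊓ L4 ≠ ⊥}.Infinite :=
  stmt1_general k L1 L2 L3 L4 h3 h4 h12 h34 hspan
end

section
/- Let k be an infinite field, let L1, L2, L3 be three distinct 2-dimensional linear subspaces of k^4 all containing a common 1-dimensional subspace x, and let L4 be a 2-dimensional subspace with L4 ∩ Li = 0 for i = 1,2,3. Then the set of 2-dimensional linear subspaces W of k^4 with W ∩ Li ≠ 0 for all i = 1,2,3,4 is infinite. -/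
/-!
Every line through the common point `x` that meets `L4` is a common transversal. The point `x`
does not lie on `L4`, which is skew to `L1 ∋ x`, so by the modular law the join with `x` is
injective on the points of `L4`; and a projective line over an infinite field has infinitely
many points.
-/

open Module Submodule

theorem Disjoint.injOn_sup_Iic {α : Type*} [Lattice α] [OrderBot α] [IsModularLattice α]
    {a b : α} (h : Disjoint a b) : Set.InjOn (· ⊔ a) (Set.Iic b) := by
  have hinf : ∀ c ≤ b, (c ⊔ a) ⊓ b = c := fun c hc => by
    rw [sup_inf_assoc_of_le a hc, h.eq_bot, sup_bot_eq]
  intro c hc d hd hcd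
  rw [← hinf c hc, ← hinf d hd]
  exact congrArg (· ⊓ b) hcd

section

variable {k V : Type*} [Field k] [AddCommGroup V] [Module k V]

theorem LinearIndependent.injective_span_singleton_add_smul {a b : V}
    (hab : LinearIndependent k ![a, b]) : Function.Injective fun t : k => k ∙ (a + t • b) := by
  intro s t hst
  obtain ⟨z, hz⟩ := span_singleton_eq_span_singleton.mp hst
  rw [Units.smul_def] at hz
  have hzero : ((z : k) - 1) • a + ((z : k) * s - t) • b = 0 := by
    linear_combination (norm := module) hz
  obtain ⟨hz1, hzs⟩ := LinearIndependent.pair_iff.mp hab _ _ hzero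
  rw [sub_eq_zero] at hz1 hzs
  rwa [hz1, one_mul] at hzs

theorem Submodule.infinite_setOf_finrank_eq_one_and_le [Infinite k] {U : Submodule k V}
    (hU : 1 < finrank k U) : {ℓ : Submodule k V | finrank k ℓ = 1 ∧ ℓ ≤ U}.Infinite := by
  have : Module.Finite k U := Module.finite_of_finrank_pos (by omega)
  obtain ⟨a, ha⟩ := finrank_pos_iff_exists_ne_zero.mp (by omega : 0 < finrank k U)
  obtain ⟨b, hab⟩ := exists_linearIndependent_pair_of_one_lt_finrank hU ha
  have hab' : LinearIndependent k ![(a : V), b] := by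
    have := hab.map' U.subtype U.ker_subtype
    rwa [← FinVec.map_eq] at this
  refine Set.infinite_of_injective_forall_mem hab'.injective_span_singleton_add_smul fun t => ?_
  have hne : (a : V) + t • b ≠ 0 := fun h => by
    simpa using (LinearIndependent.pair_iff.mp hab' 1 t (by rwa [one_smul])).1
  exact ⟨finrank_span_singleton hne,
    (span_singleton_le_iff_mem _ _).mpr (U.add_mem a.2 (U.smul_mem t b.2))⟩

theorem Submodule.finrank_sup_of_disjoint {s t : Submodule k V} [FiniteDimensional k s]
    [FiniteDimensional k t] (h : Disjoint s t) :
    finrank k ↥(s ⊔ t) = finrank k s + finrank k t := by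
  rw [← finrank_sup_add_finrank_inf_eq s t, h.eq_bot, finrank_bot, add_zero]

end

theorem stmt2_general
    (k : Type*) [Field k] [Infinite k]
    (L1 L2 L3 L4 : Submodule k (Fin 4 → k))
    (h4 : Module.finrank k L4 = 2)
    (x : Submodule k (Fin 4 → k)) (hx : Module.finrank k x = 1)
    (hx1 : x ≤ L1) (hx2 : x ≤ L2) (hx3 : x ≤ L3)
    (h41 : L4 ⊓ L1 = ⊥) :
    {W : Submodule k (Fin 4 → k) | Module.finrank k W = 2 ∧
      W ⊓ L1 ≠ ⊥ ∧ W ⊓ L2 ≠ ⊥ ∧ W ⊓ L3 ≠ ⊥ ∧ W ⊓ L4 ≠ ⊥}.Infinite := by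
  have hx_ne : x ≠ ⊥ := by rintro rfl; simp at hx
  have hx_L4 : Disjoint x L4 := (disjoint_iff.mpr h41).symm.mono_left hx1
  have hinj : Set.InjOn (· ⊔ x) {ℓ : Submodule k (Fin 4 → k) | finrank k ℓ = 1 ∧ ℓ ≤ L4} :=
    hx_L4.injOn_sup_Iic.mono fun _ hℓ => hℓ.2
  refine ((infinite_setOf_finrank_eq_one_and_le (by omega)).image hinj).mono ?_
  rintro _ ⟨ℓ, ⟨hℓ, hℓL4⟩, rfl⟩
  have hℓ_ne : ℓ ≠ ⊥ := by rintro rfl; simp at hℓ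
  have hdim : finrank k ↥(ℓ ⊔ x) = 2 := by
    rw [finrank_sup_of_disjoint (hx_L4.mono_right hℓL4).symm, hℓ, hx]
  exact ⟨hdim, ne_bot_of_le_ne_bot hx_ne (le_inf le_sup_right hx1),
    ne_bot_of_le_ne_bot hx_ne (le_inf le_sup_right hx2),
    ne_bot_of_le_ne_bot hx_ne (le_inf le_sup_right hx3),
    ne_bot_of_le_ne_bot hℓ_ne (le_inf le_sup_left hℓL4)⟩

/-- Three concurrent lines in P^3 together with a fourth line skew to all of them
have infinitely many common transversals: stated linearly in terms of
2-dimensional subspaces of k^4. -/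
theorem stmt2
    (k : Type*) [Field k] [Infinite k]
    (L1 L2 L3 L4 : Submodule k (Fin 4 → k))
    (h1 : Module.finrank k L1 = 2) (h2 : Module.finrank k L2 = 2)
    (h3 : Module.finrank k L3 = 2) (h4 : Module.finrank k L4 = 2)
    (hne12 : L1 ≠ L2) (hne13 : L1 ≠ L3) (hne23 : L2 ≠ L3)
    (x : Submodule k (Fin 4 → k)) (hx : Module.finrank k x = 1)
    (hx1 : x ≤ L1) (hx2 : x ≤ L2) (hx3 : x ≤ L3)
    (h41 : L4 ⊓ L1 = ⊥) (h42 : L4 ⊓ L2 = ⊥) (h43 : L4 ⊓ L3 = ⊥) :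
    {W : Submodule k (Fin 4 → k) | Module.finrank k W = 2 ∧
      W ⊓ L1 ≠ ⊥ ∧ W ⊓ L2 ≠ ⊥ ∧ W ⊓ L3 ≠ ⊥ ∧ W ⊓ L4 ≠ ⊥}.Infinite :=
  stmt2_general k L1 L2 L3 L4 h4 x hx hx1 hx2 hx3 h41
end

section
/- Let k be an infinite field, let L1, L2, L3 be three distinct 2-dimensional linear subspaces of k^4 all contained in a common 3-dimensional subspace P, and let L4 be a 2-dimensional subspace with L4 ∩ Li = 0 for i = 1,2,3. Then the set of 2-dimensional linear subspaces W of k^4 with W ∩ Li ≠ 0 for all i = 1,2,3,4 is infinite. -/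
open Module Submodule


/-- Three coplanar lines in P^3 together with a fourth line skew to all of them
have infinitely many common transversals: stated linearly in terms of
2-dimensional subspaces of k^4. -/
theorem stmt3
    (k : Type*) [Field k] [Infinite k]
    (L1 L2 L3 L4 : Submodule k (Fin 4 → k))
    (h1 : Module.finrank k L1 = 2) (h2 : Module.finrank k L2 = 2)
    (h3 : Module.finrank k L3 = 2) (h4 : Module.finrank k L4 = 2)
    (hne12 : L1 ≠ L2) (hne13 : L1 ≠ L3) (hne23 : L2 ≠ L3)
    (P : Submodule k (Fin 4 → k)) (hP : Module.finrank k P = 3)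
    (hP1 : L1 ≤ P) (hP2 : L2 ≤ P) (hP3 : L3 ≤ P)
    (h41 : L4 ⊓ L1 = ⊥) (h42 : L4 ⊓ L2 = ⊥) (h43 : L4 ⊓ L3 = ⊥) :
    {W : Submodule k (Fin 4 → k) | Module.finrank k W = 2 ∧
      W ⊓ L1 ≠ ⊥ ∧ W ⊓ L2 ≠ ⊥ ∧ W ⊓ L3 ≠ ⊥ ∧ W ⊓ L4 ≠ ⊥}.Infinite := by
  -- a nonzero vector v in L4 ⊓ P
  have hbot : L4 ⊓ P ≠ ⊥ := by
    intro hb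
    have hsum := Submodule.finrank_sup_add_finrank_inf_eq L4 P
    rw [hb, finrank_bot, h4, hP] at hsum
    have hle : Module.finrank k ↥(L4 ⊔ P) ≤ 4 := by
      have := Submodule.finrank_le (L4 ⊔ P)
      simpa using this
    omega
  obtain ⟨v, hv, hv0⟩ := (Submodule.ne_bot_iff _).mp hbot
  have hv4 : v ∈ L4 := hv.1
  have hvP : v ∈ P := hv.2
  have hvn : ∀ L : Submodule k (Fin 4 → k), L4 ⊓ L = ⊥ → v ∉ L := by
    intro L hL hvL
    exact hv0 ((Submodule.eq_bot_iff _).mp hL v ⟨hv4, hvL⟩)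
  have hv1 : v ∉ L1 := hvn L1 h41
  have hv2 : v ∉ L2 := hvn L2 h42
  have hv3 : v ∉ L3 := hvn L3 h43
  -- basis p, q of L1
  let b := Module.finBasisOfFinrankEq k L1 h1
  set p : Fin 4 → k := ((b 0 : L1) : Fin 4 → k) with hp
  set q : Fin 4 → k := ((b 1 : L1) : Fin 4 → k) with hq
  have hpL : p ∈ L1 := (b 0).2
  have hqL : q ∈ L1 := (b 1).2
  have hind : ∀ a c : k, a • p + c • q = 0 → a = 0 ∧ c = 0 := by
    intro a c hac
    have hli : LinearIndependent k (fun i : Fin 2 => ((b i : L1) : Fin 4 → k)) :=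
      LinearIndependent.map' b.linearIndependent L1.subtype (Submodule.ker_subtype L1)
    have hsum : ∑ i : Fin 2, (![a, c] i) • ((b i : L1) : Fin 4 → k) = 0 := by
      rw [Fin.sum_univ_two]
      show a • p + c • q = 0
      exact hac
    have := Fintype.linearIndependent_iff.mp hli ![a, c] hsum
    exact ⟨this 0, this 1⟩
  -- the family
  set w : k → (Fin 4 → k) := fun t => p + t • q with hw
  have hwL1 : ∀ t, w t ∈ L1 := fun t => L1.add_mem hpL (L1.smul_mem _ hqL)
  have hw0 : ∀ t, w t ≠ 0 := by
    intro t ht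
    have := (hind 1 t (by simpa [hw, one_smul] using ht)).1
    simp at this
  set f : k → Submodule k (Fin 4 → k) := fun t => Submodule.span k {v, w t} with hf
  have hvmem : ∀ t, v ∈ f t := fun t => Submodule.subset_span (by simp)
  have hwmem : ∀ t, w t ∈ f t := fun t => Submodule.subset_span (by simp)
  have hfP : ∀ t, f t ≤ P := by
    intro t
    apply Submodule.span_le.mpr
    rintro x (rfl | rfl)
    · exact hvP
    · exact hP1 (hwL1 t)
  have hfdim : ∀ t, Module.finrank k (f t) = 2 := by
    intro t
    have hsplit : f t = Submodule.span k {v} ⊔ Submodule.span k {w t} := by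
      rw [hf]; simp [Submodule.span_insert]
    have hinf : Submodule.span k {v} ⊓ Submodule.span k {w t} = ⊥ := by
      rw [Submodule.eq_bot_iff]
      rintro x ⟨hx1, hx2⟩
      obtain ⟨a, rfl⟩ := Submodule.mem_span_singleton.mp hx1
      obtain ⟨c, hc⟩ := Submodule.mem_span_singleton.mp hx2
      rcases eq_or_ne a 0 with rfl | ha
      · simp
      · exfalso
        apply hv1
        have : v = a⁻¹ • (c • w t) := by
          rw [hc, smul_smul, inv_mul_cancel₀ ha, one_smul]
        rw [this]
        exact L1.smul_mem _ (L1.smul_mem _ (hwL1 t))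
    have hsum := Submodule.finrank_sup_add_finrank_inf_eq (Submodule.span k {v})
      (Submodule.span k {w t})
    rw [hinf, finrank_bot, finrank_span_singleton hv0, finrank_span_singleton (hw0 t)] at hsum
    rw [hsplit]
    omega
  -- meeting the coplanar lines
  have hmeet : ∀ t, ∀ L : Submodule k (Fin 4 → k), Module.finrank k L = 2 → L ≤ P →
      f t ⊓ L ≠ ⊥ := by
    intro t L hL hLP hb
    have hsum := Submodule.finrank_sup_add_finrank_inf_eq (f t) L
    rw [hb, finrank_bot, hfdim t, hL] at hsum
    have hle : f t ⊔ L ≤ P := sup_le (hfP t) hLP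
    have := Submodule.finrank_mono hle
    rw [hP] at this
    omega
  apply Set.infinite_of_injective_forall_mem (f := f)
  case hi =>
    -- injective
    intro t s hts
    by_contra hne
    have hws : w s ∈ f t := by rw [hts]; exact hwmem s
    obtain ⟨a, c, hac⟩ := Submodule.mem_span_pair.mp hws
    -- a • v = w s - c • w t ∈ L1
    have havL1 : a • v ∈ L1 := by
      have : a • v = w s - c • w t := by rw [← hac]; abel
      rw [this]
      exact L1.sub_mem (hwL1 s) (L1.smul_mem _ (hwL1 t))
    have ha0 : a = 0 := by
      by_contra ha
      exact hv1 (by simpa [smul_smul, inv_mul_cancel₀ ha] using L1.smul_mem a⁻¹ havL1)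
    rw [ha0, zero_smul, zero_add] at hac
    -- c • (p + t q) = p + s q
    have hexp : c • p + (c * t) • q = p + s • q := by
      have := hac
      simp only [hw, smul_add, smul_smul] at this
      exact this
    have hkey : (c - 1) • p + (c * t - s) • q = 0 := by
      rw [sub_smul, sub_smul, one_smul, sub_add_sub_comm, hexp, sub_self]
    obtain ⟨hc1, hc2⟩ := hind _ _ hkey
    have hc : c = 1 := sub_eq_zero.mp hc1
    have hts' : c * t = s := sub_eq_zero.mp hc2
    rw [hc, one_mul] at hts'
    exact hne hts'
  case hf =>
    intro t
    refine ⟨hfdim t, ?_, ?_, ?_, ?_⟩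
    · exact (Submodule.ne_bot_iff _).mpr ⟨w t, ⟨hwmem t, hwL1 t⟩, hw0 t⟩
    · exact hmeet t L2 h2 hP2
    · exact hmeet t L3 h3 hP3
    · exact (Submodule.ne_bot_iff _).mpr ⟨v, ⟨hvmem t, hv4⟩, hv0⟩
end

section
/- Let k be a field and let L1, L2, L3, L4 be 2-dimensional linear subspaces of k^4 such that dim(L1 ∩ L2) = 1 and Li ∩ Lj = 0 for every pair {i,j} ≠ {1,2}. Then there are at most two 2-dimensional linear subspaces W of k^4 with W ∩ Li ≠ 0 for all i = 1,2,3,4. -/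
open Module Submodule

section Aux

variable {k V : Type*} [Field k] [AddCommGroup V] [Module k V] [FiniteDimensional k V]

lemma aux_pos_of_ne_bot {A : Submodule k V} (h : A ≠ ⊥) : 1 ≤ finrank k A := by
  rw [Nat.one_le_iff_ne_zero]
  simpa [Submodule.finrank_eq_zero] using h

lemma aux_line_le {M N : Submodule k V} (hN : finrank k N = 1) (h : M ⊓ N ≠ ⊥) : N ≤ M := by
  have h1 : 1 ≤ finrank k ↥(M ⊓ N) := aux_pos_of_ne_bot h
  have := Submodule.eq_of_le_of_finrank_le (inf_le_right : M ⊓ N ≤ N) (by omega)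
  exact inf_eq_right.mp this

lemma aux_sup_disjoint {A B : Submodule k V} (h : A ⊓ B = ⊥) :
    finrank k ↥(A ⊔ B) = finrank k A + finrank k B := by
  have := Submodule.finrank_sup_add_finrank_inf_eq A B
  rw [h] at this
  simpa using this

end Aux

section Aux4

variable {k : Type*} [Field k]

lemma aux_dim4 : finrank k (Fin 4 → k) = 4 := by simp

lemma aux_meet_line {M N N' : Submodule k (Fin 4 → k)}
    (hM : finrank k M = 3) (hN : finrank k N = 2) (hN' : finrank k N' = 2)
    (hNN' : N ⊓ N' = ⊥) (hle : N' ≤ M) : finrank k ↥(M ⊓ N) = 1 := by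
  have hsup : finrank k ↥(M ⊔ N) ≤ 4 := le_trans (Submodule.finrank_le _) (le_of_eq aux_dim4)
  have heq := Submodule.finrank_sup_add_finrank_inf_eq M N
  rw [hM, hN] at heq
  -- lower bound: finrank (M ⊓ N) ≥ 1
  have hlow : 1 ≤ finrank k ↥(M ⊓ N) := by omega
  have hup : finrank k ↥(M ⊓ N) ≤ 2 := hN ▸ Submodule.finrank_mono inf_le_right
  -- if finrank (M ⊓ N) = 2 then N ≤ M, contradiction
  rcases Nat.lt_or_ge (finrank k ↥(M ⊓ N)) 2 with hlt | hge
  · omega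
  · exfalso
    have hEq : M ⊓ N = N :=
      Submodule.eq_of_le_of_finrank_le (inf_le_right : M ⊓ N ≤ N) (by omega)
    have hNM : N ≤ M := inf_eq_right.mp hEq
    have h1 : N ⊔ N' ≤ M := sup_le hNM hle
    have h2 : finrank k ↥(N ⊔ N') ≤ 3 := hM ▸ Submodule.finrank_mono h1
    have h3 : finrank k ↥(N ⊔ N') = 4 := by
      rw [aux_sup_disjoint hNN', hN, hN']
    omega

end Aux4

/-- If exactly one pair among four lines in P^3 intersects and all other pairs are
skew, then there are at most two common transversal lines: stated linearly in
terms of 2-dimensional subspaces of k^4. -/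
theorem stmt4
    (k : Type*) [Field k]
    (L1 L2 L3 L4 : Submodule k (Fin 4 → k))
    (h1 : Module.finrank k L1 = 2) (h2 : Module.finrank k L2 = 2)
    (h3 : Module.finrank k L3 = 2) (h4 : Module.finrank k L4 = 2)
    (h12 : Module.finrank k ↥(L1 ⊓ L2) = 1)
    (h13 : L1 ⊓ L3 = ⊥) (h14 : L1 ⊓ L4 = ⊥)
    (h23 : L2 ⊓ L3 = ⊥) (h24 : L2 ⊓ L4 = ⊥) (h34 : L3 ⊓ L4 = ⊥) :
    ∃ W1 W2 : Submodule k (Fin 4 → k),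
      ∀ W : Submodule k (Fin 4 → k), Module.finrank k W = 2 →
        W ⊓ L1 ≠ ⊥ → W ⊓ L2 ≠ ⊥ → W ⊓ L3 ≠ ⊥ → W ⊓ L4 ≠ ⊥ →
        W = W1 ∨ W = W2 := by
  set D := L1 ⊓ L2 with hDdef
  set P := L1 ⊔ L2 with hPdef
  have hD3 : D ⊓ L3 = ⊥ := by
    rw [eq_bot_iff, ← h13]
    exact inf_le_inf_right L3 inf_le_left
  have hD4 : D ⊓ L4 = ⊥ := by
    rw [eq_bot_iff, ← h14]
    exact inf_le_inf_right L4 inf_le_left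
  have hPrank : finrank k ↥P = 3 := by
    have := Submodule.finrank_sup_add_finrank_inf_eq L1 L2
    rw [h1, h2] at this
    rw [hPdef]
    rw [hDdef] at h12
    omega
  set U := D ⊔ L3 with hUdef
  have hUrank : finrank k ↥U = 3 := by
    rw [hUdef, aux_sup_disjoint hD3, h12, h3]
  have hP3 : finrank k ↥(P ⊓ L3) = 1 :=
    aux_meet_line hPrank h3 h1 (by rw [inf_comm]; exact h13) le_sup_left
  have hP4 : finrank k ↥(P ⊓ L4) = 1 :=
    aux_meet_line hPrank h4 h1 (by rw [inf_comm]; exact h14) le_sup_left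
  have hU4 : finrank k ↥(U ⊓ L4) = 1 :=
    aux_meet_line hUrank h4 h3 (by rw [inf_comm]; exact h34) le_sup_right
  refine ⟨(P ⊓ L3) ⊔ (P ⊓ L4), D ⊔ (U ⊓ L4), ?_⟩
  intro W hW w1 w2 w3 w4
  by_cases hcase : W ⊓ D = ⊥
  · left
    -- W is contained in the plane P
    have hA : (W ⊓ L1) ⊓ (W ⊓ L2) = ⊥ := by
      rw [← inf_inf_distrib_left]
      exact hcase
    have hSrank : 2 ≤ finrank k ↥((W ⊓ L1) ⊔ (W ⊓ L2)) := by
      rw [aux_sup_disjoint hA]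
      have u1 := aux_pos_of_ne_bot w1
      have u2 := aux_pos_of_ne_bot w2
      omega
    have hSW : (W ⊓ L1) ⊔ (W ⊓ L2) ≤ W := sup_le inf_le_left inf_le_left
    have hWS : W = (W ⊓ L1) ⊔ (W ⊓ L2) :=
      (Submodule.eq_of_le_of_finrank_le hSW (by omega)).symm
    have hWP : W ≤ P := by
      rw [hWS]
      exact sup_le (le_trans inf_le_right le_sup_left) (le_trans inf_le_right le_sup_right)
    have hWPinf : W ⊓ P = W := inf_eq_left.mpr hWP
    have k3 : P ⊓ L3 ≤ W := by
      apply aux_line_le hP3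
      rw [← inf_assoc, hWPinf]
      exact w3
    have k4 : P ⊓ L4 ≤ W := by
      apply aux_line_le hP4
      rw [← inf_assoc, hWPinf]
      exact w4
    have hd : (P ⊓ L3) ⊓ (P ⊓ L4) = ⊥ := by
      rw [eq_bot_iff, ← h34]
      exact inf_le_inf inf_le_right inf_le_right
    have hW1rank : finrank k ↥((P ⊓ L3) ⊔ (P ⊓ L4)) = 2 := by
      rw [aux_sup_disjoint hd, hP3, hP4]
    exact (Submodule.eq_of_le_of_finrank_le (sup_le k3 k4) (by omega)).symm
  · right
    -- D ≤ W, hence W ≤ U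
    have hDW : D ≤ W := aux_line_le h12 hcase
    have hA : D ⊓ (W ⊓ L3) = ⊥ := by
      rw [eq_bot_iff, ← hD3]
      exact inf_le_inf_left D inf_le_right
    have hSrank : 2 ≤ finrank k ↥(D ⊔ (W ⊓ L3)) := by
      rw [aux_sup_disjoint hA, h12]
      have u3 := aux_pos_of_ne_bot w3
      omega
    have hSW : D ⊔ (W ⊓ L3) ≤ W := sup_le hDW inf_le_left
    have hWS : W = D ⊔ (W ⊓ L3) :=
      (Submodule.eq_of_le_of_finrank_le hSW (by omega)).symm
    have hWU : W ≤ U := by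
      rw [hWS, hUdef]
      exact sup_le le_sup_left (le_trans inf_le_right le_sup_right)
    have hWUinf : W ⊓ U = W := inf_eq_left.mpr hWU
    have k4 : U ⊓ L4 ≤ W := by
      apply aux_line_le hU4
      rw [← inf_assoc, hWUinf]
      exact w4
    have hd : D ⊓ (U ⊓ L4) = ⊥ := by
      rw [eq_bot_iff, ← hD4]
      exact inf_le_inf_left D inf_le_right
    have hW2rank : finrank k ↥(D ⊔ (U ⊓ L4)) = 2 := by
      rw [aux_sup_disjoint hd, h12, hU4]
    exact (Submodule.eq_of_le_of_finrank_le (sup_le hDW k4) (by omega)).symm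
end

section
/- Let k be a field and let L1, L2, L3, L4 be 2-dimensional linear subspaces of k^4 such that dim(L1 ∩ L2) = 1, dim(L3 ∩ L4) = 1, L1 ∩ L3 = L1 ∩ L4 = L2 ∩ L3 = L2 ∩ L4 = 0, L1 ∩ L2 is not contained in L3 + L4, and L3 ∩ L4 is not contained in L1 + L2. Then the set of 2-dimensional linear subspaces W of k^4 with W ∩ Li ≠ 0 for all i = 1,2,3,4 is finite. -/
open Module Submodule

lemma key_trans {k V : Type*} [Field k] [AddCommGroup V] [Module k V]
    [FiniteDimensional k V]
    {L1 L2 W : Submodule k V} (h12 : Module.finrank k ↥(L1 ⊓ L2) = 1)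
    (hW : Module.finrank k ↥W = 2) (hw1 : W ⊓ L1 ≠ ⊥) (hw2 : W ⊓ L2 ≠ ⊥) :
    L1 ⊓ L2 ≤ W ∨ W ≤ L1 ⊔ L2 := by
  obtain ⟨v1, hv1, hv1ne⟩ := Submodule.exists_mem_ne_zero_of_ne_bot hw1
  obtain ⟨v2, hv2, hv2ne⟩ := Submodule.exists_mem_ne_zero_of_ne_bot hw2
  obtain ⟨hv1W, hv1L⟩ := Submodule.mem_inf.mp hv1
  obtain ⟨hv2W, hv2L⟩ := Submodule.mem_inf.mp hv2
  by_cases hc1 : v1 ∈ L2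
  · left
    have hsle : Submodule.span k {v1} ≤ L1 ⊓ L2 :=
      Submodule.span_le.mpr (by simp [Submodule.mem_inf, hv1L, hc1])
    have heq : Submodule.span k {v1} = L1 ⊓ L2 :=
      Submodule.eq_of_le_of_finrank_le hsle
        (by rw [h12, finrank_span_singleton hv1ne])
    rw [← heq]
    exact Submodule.span_le.mpr (by simp [hv1W])
  by_cases hc2 : v2 ∈ L1
  · left
    have hsle : Submodule.span k {v2} ≤ L1 ⊓ L2 :=
      Submodule.span_le.mpr (by simp [Submodule.mem_inf, hv2L, hc2])
    have heq : Submodule.span k {v2} = L1 ⊓ L2 :=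
      Submodule.eq_of_le_of_finrank_le hsle
        (by rw [h12, finrank_span_singleton hv2ne])
    rw [← heq]
    exact Submodule.span_le.mpr (by simp [hv2W])
  · right
    have indep : LinearIndependent k ![v1, v2] := by
      rw [LinearIndependent.pair_iff]
      intro s t hst
      by_cases hs : s = 0
      · subst hs
        simp only [zero_smul, zero_add] at hst
        rcases smul_eq_zero.mp hst with ht | h0
        · exact ⟨rfl, ht⟩
        · exact absurd h0 hv2ne
      · exfalso
        apply hc1
        have h' : s • v1 = -(t • v2) := eq_neg_of_add_eq_zero_left hst
        have hv : v1 = (-(s⁻¹ * t)) • v2 := by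
          have : v1 = s⁻¹ • (s • v1) := by
            rw [← mul_smul, inv_mul_cancel₀ hs, one_smul]
          rw [this, h', smul_neg, ← mul_smul, ← neg_smul]
        rw [hv]
        exact Submodule.smul_mem _ _ hv2L
    have hrange : Set.range ![v1, v2] = {v1, v2} := by
      ext x
      simp [Fin.exists_fin_two, or_comm]
    have hspan : Module.finrank k ↥(Submodule.span k {v1, v2}) = 2 := by
      have := finrank_span_eq_card indep
      rw [hrange] at this
      simpa using this
    have heq : Submodule.span k {v1, v2} = W :=
      Submodule.eq_of_le_of_finrank_le
        (Submodule.span_le.mpr (by rintro x (rfl | rfl) <;> assumption))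
        (by rw [hW, hspan])
    rw [← heq]
    refine Submodule.span_le.mpr ?_
    rintro x (rfl | rfl)
    · exact Submodule.mem_sup_left hv1L
    · exact Submodule.mem_sup_right hv2L

set_option synthInstance.maxHeartbeats 1000000 in
set_option maxHeartbeats 1000000 in
/-- If there are exactly two pairs of intersecting lines among four lines in P^3 and
neither intersection point lies in the plane spanned by the other pair, then the
set of common transversal lines is finite: stated linearly in terms of
2-dimensional subspaces of k^4. -/
theorem stmt5
    (k : Type*) [Field k]
    (L1 L2 L3 L4 : Submodule k (Fin 4 → k))
    (h1 : Module.finrank k L1 = 2) (h2 : Module.finrank k L2 = 2)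
    (h3 : Module.finrank k L3 = 2) (h4 : Module.finrank k L4 = 2)
    (h12 : Module.finrank k ↥(L1 ⊓ L2) = 1)
    (h34 : Module.finrank k ↥(L3 ⊓ L4) = 1)
    (h13 : L1 ⊓ L3 = ⊥) (h14 : L1 ⊓ L4 = ⊥)
    (h23 : L2 ⊓ L3 = ⊥) (h24 : L2 ⊓ L4 = ⊥)
    (hnc12 : ¬ L1 ⊓ L2 ≤ L3 ⊔ L4) (hnc34 : ¬ L3 ⊓ L4 ≤ L1 ⊔ L2) :
    {W : Submodule k (Fin 4 → k) | Module.finrank k W = 2 ∧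
      W ⊓ L1 ≠ ⊥ ∧ W ⊓ L2 ≠ ⊥ ∧ W ⊓ L3 ≠ ⊥ ∧ W ⊓ L4 ≠ ⊥}.Finite := by
  have htot : Module.finrank k (Fin 4 → k) = 4 := by simp
  have hP12 : Module.finrank k ↥(L1 ⊔ L2) = 3 := by
    have := Submodule.finrank_sup_add_finrank_inf_eq L1 L2
    omega
  have hP34 : Module.finrank k ↥(L3 ⊔ L4) = 3 := by
    have := Submodule.finrank_sup_add_finrank_inf_eq L3 L4
    omega
  have hAinf : (L1 ⊓ L2) ⊓ (L3 ⊓ L4) = ⊥ := by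
    rw [eq_bot_iff, ← h13]
    exact le_inf (inf_le_left.trans inf_le_left) (inf_le_right.trans inf_le_left)
  have hArk : Module.finrank k ↥((L1 ⊓ L2) ⊔ (L3 ⊓ L4)) = 2 := by
    have := Submodule.finrank_sup_add_finrank_inf_eq (L1 ⊓ L2) (L3 ⊓ L4)
    rw [hAinf] at this
    simp only [finrank_bot] at this
    omega
  have hbig : Module.finrank k ↥((L1 ⊔ L2) ⊔ (L3 ⊔ L4)) = 4 := by
    have hle := Submodule.finrank_le ((L1 ⊔ L2) ⊔ (L3 ⊔ L4))
    rw [htot] at hle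
    by_contra hne
    have heq : L1 ⊔ L2 = (L1 ⊔ L2) ⊔ (L3 ⊔ L4) :=
      Submodule.eq_of_le_of_finrank_le le_sup_left (by omega)
    have hle2 : L3 ⊔ L4 ≤ L1 ⊔ L2 := by rw [heq]; exact le_sup_right
    exact hnc34 ((inf_le_left.trans le_sup_left).trans hle2)
  have hBrk : Module.finrank k ↥((L1 ⊔ L2) ⊓ (L3 ⊔ L4)) = 2 := by
    have := Submodule.finrank_sup_add_finrank_inf_eq (L1 ⊔ L2) (L3 ⊔ L4)
    omega
  apply Set.Finite.subset
    ((Set.finite_singleton ((L1 ⊔ L2) ⊓ (L3 ⊔ L4))).insert ((L1 ⊓ L2) ⊔ (L3 ⊓ L4)))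
  rintro W ⟨hWr, hw1, hw2, hw3, hw4⟩
  simp only [Set.mem_insert_iff, Set.mem_singleton_iff]
  rcases key_trans h12 hWr hw1 hw2 with hA1 | hB1 <;>
    rcases key_trans h34 hWr hw3 hw4 with hA2 | hB2
  · left
    exact (Submodule.eq_of_le_of_finrank_le (sup_le hA1 hA2) (by omega)).symm
  · exact absurd (hA1.trans hB2) hnc12
  · exact absurd (hA2.trans hB1) hnc34
  · right
    exact Submodule.eq_of_le_of_finrank_le (le_inf hB1 hB2) (by omega)
end

section
/- Let k be an algebraically closed field. For any four 2-dimensional linear subspaces L1, L2, L3, L4 of k^5 and any 1-dimensional linear subspace p of k^5, there exists a 3-dimensional linear subspace W of k^5 with p ⊆ W and W ∩ Li ≠ 0 for all i = 1,2,3,4. -/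
open Module Submodule

section Helpers

variable {k : Type*} [Field k] {V : Type*} [AddCommGroup V] [Module k V]
  [FiniteDimensional k V]

/-- One-step extension: any proper subspace is contained in one of rank one more. -/
lemma aux_step (S : Submodule k V) (h : finrank k S < finrank k V) :
    ∃ T : Submodule k V, S ≤ T ∧ finrank k T = finrank k S + 1 := by
  have hS : S ≠ ⊤ := by
    intro hs
    rw [hs, finrank_top] at h
    exact lt_irrefl _ h
  obtain ⟨v, hv⟩ : ∃ v, v ∉ S := by
    by_contra hc
    push_neg at hc
    exact hS (eq_top_iff.2 fun x _ => hc x)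
  have hv0 : v ≠ 0 := fun h0 => hv (h0 ▸ S.zero_mem)
  refine ⟨S ⊔ (k ∙ v), le_sup_left, ?_⟩
  have hinf : S ⊓ (k ∙ v) = ⊥ := by
    rw [eq_bot_iff]
    rintro x ⟨hxS, hxv⟩
    obtain ⟨c, rfl⟩ := mem_span_singleton.1 hxv
    rcases eq_or_ne c 0 with rfl | hc
    · simp
    · refine absurd ?_ hv
      have := S.smul_mem c⁻¹ hxS
      rwa [smul_smul, inv_mul_cancel₀ hc, one_smul] at this
  have := finrank_sup_add_finrank_inf_eq S (k ∙ v)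
  rw [hinf, finrank_bot, finrank_span_singleton hv0] at this
  omega

/-- Extend a subspace of rank ≤ n to one of rank exactly n. -/
lemma aux_extend (n : ℕ) (S : Submodule k V) (h : finrank k S ≤ n)
    (hn : n ≤ finrank k V) :
    ∃ W : Submodule k V, S ≤ W ∧ finrank k W = n := by
  obtain ⟨m, hm⟩ : ∃ m, m = n - finrank k S := ⟨_, rfl⟩
  induction m generalizing S with
  | zero => exact ⟨S, le_refl S, by omega⟩
  | succ m ih =>
    obtain ⟨T, hST, hT⟩ := aux_step S (by omega)
    obtain ⟨W, hTW, hW⟩ := ih T (by omega) (by omega)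
    exact ⟨W, hST.trans hTW, hW⟩

/-- In a 4-dimensional space, given a nonzero vector `v` and two planes `C`, `D`,
there is a plane through `v` meeting both. -/
lemma aux_meet_two (hV : finrank k V = 4) (v : V) (hv : v ≠ 0)
    (C D : Submodule k V) (hC : finrank k C = 2) (hD : finrank k D = 2) :
    ∃ W : Submodule k V, finrank k W = 2 ∧ v ∈ W ∧ W ⊓ C ≠ ⊥ ∧ W ⊓ D ≠ ⊥ := by
  have hCne : C ≠ ⊥ := by intro h; rw [h, finrank_bot] at hC; omega
  have hDne : D ≠ ⊥ := by intro h; rw [h, finrank_bot] at hD; omega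
  -- helper to conclude
  have conclude : ∀ (c d : V), c ∈ C → c ≠ 0 → d ∈ D → d ≠ 0 →
      ∀ W : Submodule k V, c ∈ W → d ∈ W → v ∈ W → finrank k W = 2 →
      ∃ W : Submodule k V, finrank k W = 2 ∧ v ∈ W ∧ W ⊓ C ≠ ⊥ ∧ W ⊓ D ≠ ⊥ := by
    intro c d hcC hc0 hdD hd0 W hcW hdW hvW hW
    refine ⟨W, hW, hvW, ?_, ?_⟩
    · exact (Submodule.ne_bot_iff _).2 ⟨c, ⟨hcW, hcC⟩, hc0⟩
    · exact (Submodule.ne_bot_iff _).2 ⟨d, ⟨hdW, hdD⟩, hd0⟩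
  by_cases hvC : v ∈ C
  · obtain ⟨d, hdD, hd0⟩ := Submodule.exists_mem_ne_zero_of_ne_bot hDne
    have hle : finrank k ((k ∙ v) ⊔ (k ∙ d) : Submodule k V) ≤ 2 := by
      have h1 := finrank_sup_add_finrank_inf_eq (k ∙ v) (k ∙ d)
      have h2 : finrank k (k ∙ v) = 1 := finrank_span_singleton hv
      have h3 : finrank k (k ∙ d) = 1 := finrank_span_singleton hd0
      omega
    obtain ⟨W, hSW, hW⟩ := aux_extend 2 _ hle (by omega)
    exact conclude v d hvC hv hdD hd0 W
      (hSW (Submodule.mem_sup_left (mem_span_singleton_self v)))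
      (hSW (Submodule.mem_sup_right (mem_span_singleton_self d)))
      (hSW (Submodule.mem_sup_left (mem_span_singleton_self v))) hW
  · -- U = span v ⊔ C has rank 3, so meets D
    have hinf : (k ∙ v) ⊓ C = ⊥ := by
      rw [eq_bot_iff]
      rintro x ⟨hxv, hxC⟩
      obtain ⟨c, rfl⟩ := mem_span_singleton.1 hxv
      rcases eq_or_ne c 0 with rfl | hc
      · simp
      · refine absurd ?_ hvC
        have := C.smul_mem c⁻¹ hxC
        rwa [smul_smul, inv_mul_cancel₀ hc, one_smul] at this
    have hUrank : finrank k ((k ∙ v) ⊔ C : Submodule k V) = 3 := by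
      have h1 := finrank_sup_add_finrank_inf_eq (k ∙ v) C
      have h2 : finrank k (k ∙ v) = 1 := finrank_span_singleton hv
      rw [hinf, finrank_bot] at h1
      omega
    have hUD : ((k ∙ v) ⊔ C) ⊓ D ≠ ⊥ := by
      intro hbot
      have h1 := finrank_sup_add_finrank_inf_eq ((k ∙ v) ⊔ C) D
      rw [hbot, finrank_bot] at h1
      have h2 : finrank k (((k ∙ v) ⊔ C) ⊔ D : Submodule k V) ≤ 4 := hV ▸ Submodule.finrank_le _
      omega
    obtain ⟨d, ⟨hdU, hdD⟩, hd0⟩ := Submodule.exists_mem_ne_zero_of_ne_bot hUD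
    obtain ⟨y, hyv, c, hcC, hyc⟩ := Submodule.mem_sup.1 hdU
    obtain ⟨α, rfl⟩ := mem_span_singleton.1 hyv
    by_cases hc : c = 0
    · -- d = α • v, so v ∈ D
      subst hc
      rw [add_zero] at hyc
      have hα : α ≠ 0 := by rintro rfl; rw [zero_smul] at hyc; exact hd0 hyc.symm
      have hvD : v ∈ D := by
        have := D.smul_mem α⁻¹ hdD
        rw [← hyc, smul_smul, inv_mul_cancel₀ hα, one_smul] at this
        exact this
      obtain ⟨c0, hc0C, hc00⟩ := Submodule.exists_mem_ne_zero_of_ne_bot hCne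
      have hle : finrank k ((k ∙ v) ⊔ (k ∙ c0) : Submodule k V) ≤ 2 := by
        have h1 := finrank_sup_add_finrank_inf_eq (k ∙ v) (k ∙ c0)
        have h2 : finrank k (k ∙ v) = 1 := finrank_span_singleton hv
        have h3 : finrank k (k ∙ c0) = 1 := finrank_span_singleton hc00
        omega
      obtain ⟨W, hSW, hW⟩ := aux_extend 2 _ hle (by omega)
      exact conclude c0 v hc0C hc00 hvD hv W
        (hSW (Submodule.mem_sup_right (mem_span_singleton_self c0)))
        (hSW (Submodule.mem_sup_left (mem_span_singleton_self v)))
        (hSW (Submodule.mem_sup_left (mem_span_singleton_self v))) hW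
    · -- d = α • v + c with c ≠ 0
      have hle : finrank k ((k ∙ v) ⊔ (k ∙ c) : Submodule k V) ≤ 2 := by
        have h1 := finrank_sup_add_finrank_inf_eq (k ∙ v) (k ∙ c)
        have h2 : finrank k (k ∙ v) = 1 := finrank_span_singleton hv
        have h3 : finrank k (k ∙ c) = 1 := finrank_span_singleton hc
        omega
      obtain ⟨W, hSW, hW⟩ := aux_extend 2 _ hle (by omega)
      have hvW : v ∈ W := hSW (Submodule.mem_sup_left (mem_span_singleton_self v))
      have hcW : c ∈ W := hSW (Submodule.mem_sup_right (mem_span_singleton_self c))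
      have hdW : d ∈ W := by rw [← hyc]; exact W.add_mem (W.smul_mem α hvW) hcW
      exact conclude c d hcC hc hdD hd0 W hcW hdW hvW hW

end Helpers

section Core

variable {k : Type*} [Field k] [IsAlgClosed k] {V : Type*} [AddCommGroup V] [Module k V]
  [FiniteDimensional k V]

/-- If two of the four planes meet, a suitable transversal plane exists. -/
lemma aux_pair (hV : finrank k V = 4) {X Y : Submodule k V} (hXY : X ⊓ Y ≠ ⊥)
    (C D : Submodule k V) (hC : finrank k C = 2) (hD : finrank k D = 2) :
    ∃ W : Submodule k V, finrank k W = 2 ∧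
      W ⊓ X ≠ ⊥ ∧ W ⊓ Y ≠ ⊥ ∧ W ⊓ C ≠ ⊥ ∧ W ⊓ D ≠ ⊥ := by
  obtain ⟨v, ⟨hvX, hvY⟩, hv0⟩ := Submodule.exists_mem_ne_zero_of_ne_bot hXY
  obtain ⟨W, hW, hvW, hWC, hWD⟩ := aux_meet_two hV v hv0 C D hC hD
  exact ⟨W, hW, (Submodule.ne_bot_iff _).2 ⟨v, ⟨hvW, hvX⟩, hv0⟩,
    (Submodule.ne_bot_iff _).2 ⟨v, ⟨hvW, hvY⟩, hv0⟩, hWC, hWD⟩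

/-- The general-position case: four pairwise transverse planes in a 4-space have
a common transversal plane (eigenvalue argument). -/
lemma aux_general (hV : finrank k V = 4) (A B C D : Submodule k V)
    (hA : finrank k A = 2) (hB : finrank k B = 2)
    (hC : finrank k C = 2) (hD : finrank k D = 2)
    (hAB : A ⊓ B = ⊥) (hAC : A ⊓ C = ⊥) (hAD : A ⊓ D = ⊥)
    (hBC : B ⊓ C = ⊥) (hBD : B ⊓ D = ⊥) (hCD : C ⊓ D = ⊥) :
    ∃ W : Submodule k V, finrank k W = 2 ∧
      W ⊓ A ≠ ⊥ ∧ W ⊓ B ≠ ⊥ ∧ W ⊓ C ≠ ⊥ ∧ W ⊓ D ≠ ⊥ := by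
  classical
  -- A and B are complementary
  have hsup : A ⊔ B = ⊤ := by
    have h1 := finrank_sup_add_finrank_inf_eq A B
    rw [hAB, finrank_bot] at h1
    apply Submodule.eq_top_of_finrank_eq
    omega
  have hcompl : IsCompl A B := ⟨disjoint_iff.2 hAB, codisjoint_iff.2 hsup⟩
  set πA := A.linearProjOfIsCompl B hcompl with hπA
  set πB := B.linearProjOfIsCompl A hcompl.symm with hπB
  have hproj : ∀ x : V, (πA x : V) + (πB x : V) = x :=
    Submodule.projection_add_projection_eq_self hcompl
  -- the graph construction: for a plane E transverse to A and B, get φE : A ≃ B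
  have graph : ∀ (E : Submodule k V), finrank k E = 2 → A ⊓ E = ⊥ → B ⊓ E = ⊥ →
      ∃ φ : A →ₗ[k] B, Function.Injective φ ∧ ∀ a : A, (a : V) + (φ a : V) ∈ E := by
    intro E hE hAE hBE
    set f : E →ₗ[k] A := πA ∘ₗ E.subtype with hf
    have hfinj : Function.Injective f := by
      rw [← LinearMap.ker_eq_bot, eq_bot_iff]
      rintro x hx
      have hx' : (x : V) ∈ B := by
        have : πA (x : V) = 0 := hx
        simpa using (Submodule.linearProjOfIsCompl_apply_eq_zero_iff hcompl).1 this
      have : (x : V) ∈ B ⊓ E := ⟨hx', x.2⟩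
      rw [hBE] at this
      rw [Submodule.mem_bot]
      exact Subtype.ext ((Submodule.mem_bot k).1 this)
    set e := f.linearEquivOfInjective hfinj (by rw [hE, hA]) with he
    set φ : A →ₗ[k] B := πB ∘ₗ E.subtype ∘ₗ (e.symm : A →ₗ[k] E) with hφ
    have hmem : ∀ a : A, (a : V) + (φ a : V) ∈ E := by
      intro a
      have h1 : πA ((e.symm a : E) : V) = a := by
        have h : e (e.symm a) = f (e.symm a) :=
          f.linearEquivOfInjective_apply hfinj (by rw [hE, hA]) (e.symm a)
        rw [e.apply_symm_apply] at h
        exact h.symm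
      have h2 := hproj ((e.symm a : E) : V)
      rw [h1] at h2
      have h3 : (φ a : V) = (πB ((e.symm a : E) : V) : V) := by rw [hφ]; rfl
      rw [h3, h2]
      exact (e.symm a : E).2
    refine ⟨φ, ?_, hmem⟩
    intro a a' haa'
    have h4 : ((a : V) - (a' : V)) ∈ E := by
      have := E.sub_mem (hmem a) (hmem a')
      rw [haa'] at this
      simpa using this
    have h5 : ((a : V) - (a' : V)) ∈ A ⊓ E := ⟨A.sub_mem a.2 a'.2, h4⟩
    rw [hAE] at h5
    exact Subtype.ext (sub_eq_zero.1 h5)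
  obtain ⟨φ, hφinj, hφmem⟩ := graph C hC hAC hBC
  obtain ⟨ψ, hψinj, hψmem⟩ := graph D hD hAD hBD
  haveI : Nontrivial A := nontrivial_of_finrank_pos (R := k) (by omega)
  set Φ := φ.linearEquivOfInjective hφinj (by rw [hA, hB]) with hΦ
  have hΦapp : ∀ x : A, Φ x = φ x := fun x =>
    φ.linearEquivOfInjective_apply hφinj (by rw [hA, hB]) x
  set θ : Module.End k A := (Φ.symm : B →ₗ[k] A) ∘ₗ ψ with hθ
  obtain ⟨t, ht⟩ := Module.End.exists_eigenvalue θ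
  obtain ⟨a, ha⟩ := ht.exists_hasEigenvector
  have ha0 : a ≠ 0 := ha.2
  have hθa : Φ.symm (ψ a) = t • a := ha.apply_eq_smul
  have hψφ : ψ a = t • φ a := by
    have := congrArg Φ hθa
    rw [Φ.apply_symm_apply, map_smul, hΦapp] at this
    exact this
  have hφa0 : φ a ≠ 0 := fun h => ha0 (hφinj (by rw [h, map_zero]))
  have hψa0 : ψ a ≠ 0 := fun h => ha0 (hψinj (by rw [h, map_zero]))
  have haV : (a : V) ≠ 0 := fun h => ha0 (Subtype.ext h)
  have hφaV : ((φ a : B) : V) ≠ 0 := fun h => hφa0 (Subtype.ext h)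
  have ht0 : t ≠ 0 := by
    rintro rfl
    rw [zero_smul] at hψφ
    exact hψa0 hψφ
  -- linear independence of a and φ a
  have indep : ∀ s r : k, s • (a : V) + r • ((φ a : B) : V) = 0 → s = 0 ∧ r = 0 := by
    intro s r h
    have h1 : s • (a : V) = -(r • ((φ a : B) : V)) := eq_neg_of_add_eq_zero_left h
    have h2 : s • (a : V) ∈ A ⊓ B := ⟨A.smul_mem s a.2, by rw [h1]; exact B.neg_mem (B.smul_mem r (φ a).2)⟩
    rw [hAB, Submodule.mem_bot] at h2
    have hs : s = 0 := by
      rcases smul_eq_zero.1 h2 with hs | h0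
      · exact hs
      · exact absurd h0 haV
    refine ⟨hs, ?_⟩
    rw [hs, zero_smul, zero_add] at h
    rcases smul_eq_zero.1 h with hr | h0
    · exact hr
    · exact absurd h0 hφaV
  set u : V := (a : V) + ((φ a : B) : V) with hu
  have hu0 : u ≠ 0 := by
    intro h
    have := indep 1 1 (by rw [one_smul, one_smul]; exact h)
    exact one_ne_zero this.1
  have huC : u ∈ C := hφmem a
  have ht1 : t ≠ 1 := by
    rintro rfl
    have hd : u ∈ D := by
      have := hψmem a
      rw [hψφ, one_smul] at this
      exact this
    have : u ∈ C ⊓ D := ⟨huC, hd⟩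
    rw [hCD, Submodule.mem_bot] at this
    exact hu0 this
  set w : V := (a : V) + t • ((φ a : B) : V) with hw
  have hw0 : w ≠ 0 := by
    intro h
    have := indep 1 t (by rw [one_smul]; exact h)
    exact one_ne_zero this.1
  have hwD : w ∈ D := by
    have := hψmem a
    rw [hψφ] at this
    rw [hw]
    simpa using this
  set W : Submodule k V := (k ∙ u) ⊔ (k ∙ w) with hW
  have huW : u ∈ W := Submodule.mem_sup_left (mem_span_singleton_self u)
  have hwW : w ∈ W := Submodule.mem_sup_right (mem_span_singleton_self w)
  have hWinf : (k ∙ u) ⊓ (k ∙ w) = ⊥ := by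
    rw [eq_bot_iff]
    rintro x ⟨hx1, hx2⟩
    obtain ⟨c, rfl⟩ := mem_span_singleton.1 hx1
    obtain ⟨d, hd⟩ := mem_span_singleton.1 hx2
    have hexp : c • u - d • w = (c - d) • (a : V) + (c - d * t) • ((φ a : B) : V) := by
      rw [hu, hw, smul_add, smul_add, smul_smul, sub_smul, sub_smul]
      abel
    have hzero : c • u - d • w = 0 := by rw [← hd, sub_self]
    obtain ⟨e1, e2⟩ := indep _ _ (hexp.symm.trans hzero)
    have hd0 : d = 0 := by
      have hdt : d * (1 - t) = 0 := by linear_combination e2 - e1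
      rcases mul_eq_zero.1 hdt with h | h
      · exact h
      · exact absurd (sub_eq_zero.1 h).symm ht1
    have hc0 : c = 0 := by rw [hd0] at e1; simpa using e1
    rw [Submodule.mem_bot, hc0, zero_smul]
  have hWrank : finrank k W = 2 := by
    have h1 := finrank_sup_add_finrank_inf_eq (k ∙ u) (k ∙ w)
    rw [hWinf, finrank_bot, finrank_span_singleton hu0, finrank_span_singleton hw0] at h1
    rw [hW]
    omega
  refine ⟨W, hWrank, ?_, ?_, ?_, ?_⟩
  · -- W ⊓ A via (t - 1) • a
    have hmemW : t • u - w ∈ W := W.sub_mem (W.smul_mem t huW) hwW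
    have hexp : t • u - w = (t - 1) • (a : V) := by
      rw [hu, hw, smul_add, sub_smul, one_smul]
      abel
    refine (Submodule.ne_bot_iff _).2 ⟨(t - 1) • (a : V), ⟨hexp ▸ hmemW, A.smul_mem _ a.2⟩, ?_⟩
    exact smul_ne_zero (sub_ne_zero.2 ht1) haV
  · -- W ⊓ B via (t - 1) • φ a
    have hmemW : w - u ∈ W := W.sub_mem hwW huW
    have hexp : w - u = (t - 1) • ((φ a : B) : V) := by
      rw [hu, hw, sub_smul, one_smul]
      abel
    refine (Submodule.ne_bot_iff _).2 ⟨(t - 1) • ((φ a : B) : V),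
      ⟨hexp ▸ hmemW, B.smul_mem _ (φ a).2⟩, ?_⟩
    exact smul_ne_zero (sub_ne_zero.2 ht1) hφaV
  · exact (Submodule.ne_bot_iff _).2 ⟨u, ⟨huW, huC⟩, hu0⟩
  · exact (Submodule.ne_bot_iff _).2 ⟨w, ⟨hwW, hwD⟩, hw0⟩

/-- Four planes in a 4-dimensional space have a common transversal plane. -/
lemma aux_four (hV : finrank k V = 4) (A B C D : Submodule k V)
    (hA : finrank k A = 2) (hB : finrank k B = 2)
    (hC : finrank k C = 2) (hD : finrank k D = 2) :
    ∃ W : Submodule k V, finrank k W = 2 ∧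
      W ⊓ A ≠ ⊥ ∧ W ⊓ B ≠ ⊥ ∧ W ⊓ C ≠ ⊥ ∧ W ⊓ D ≠ ⊥ := by
  by_cases hAB : A ⊓ B = ⊥
  · by_cases hAC : A ⊓ C = ⊥
    · by_cases hAD : A ⊓ D = ⊥
      · by_cases hBC : B ⊓ C = ⊥
        · by_cases hBD : B ⊓ D = ⊥
          · by_cases hCD : C ⊓ D = ⊥
            · exact aux_general hV A B C D hA hB hC hD hAB hAC hAD hBC hBD hCD
            · obtain ⟨W, h0, hx, hy, hc, hd⟩ := aux_pair hV hCD A B hA hB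
              exact ⟨W, h0, hc, hd, hx, hy⟩
          · obtain ⟨W, h0, hx, hy, hc, hd⟩ := aux_pair hV hBD A C hA hC
            exact ⟨W, h0, hc, hx, hd, hy⟩
        · obtain ⟨W, h0, hx, hy, hc, hd⟩ := aux_pair hV hBC A D hA hD
          exact ⟨W, h0, hc, hx, hy, hd⟩
      · obtain ⟨W, h0, hx, hy, hc, hd⟩ := aux_pair hV hAD B C hB hC
        exact ⟨W, h0, hx, hc, hd, hy⟩
    · obtain ⟨W, h0, hx, hy, hc, hd⟩ := aux_pair hV hAC B D hB hD
      exact ⟨W, h0, hx, hc, hy, hd⟩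
  · obtain ⟨W, h0, hx, hy, hc, hd⟩ := aux_pair hV hAB C D hC hD
    exact ⟨W, h0, hx, hy, hc, hd⟩

end Core

/-- Over an algebraically closed field, for any four lines in P^4 and any point p,
there is a plane through p meeting all four lines: stated linearly for subspaces
of k^5. -/
theorem stmt10
    (k : Type*) [Field k] [IsAlgClosed k]
    (L1 L2 L3 L4 : Submodule k (Fin 5 → k))
    (h1 : Module.finrank k L1 = 2) (h2 : Module.finrank k L2 = 2)
    (h3 : Module.finrank k L3 = 2) (h4 : Module.finrank k L4 = 2)
    (p : Submodule k (Fin 5 → k)) (hp : Module.finrank k p = 1) :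
    ∃ W : Submodule k (Fin 5 → k), Module.finrank k W = 3 ∧ p ≤ W ∧
      W ⊓ L1 ≠ ⊥ ∧ W ⊓ L2 ≠ ⊥ ∧ W ⊓ L3 ≠ ⊥ ∧ W ⊓ L4 ≠ ⊥ := by
  classical
  have hdim5 : finrank k (Fin 5 → k) = 5 := by
    simp [Module.finrank_pi]
  have hQ : finrank k ((Fin 5 → k) ⧸ p) = 4 := by
    have := p.finrank_quotient_add_finrank
    omega
  have hpW : ∀ Wb : Submodule k ((Fin 5 → k) ⧸ p), p ≤ Wb.comap p.mkQ := by
    intro Wb x hx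
    rw [Submodule.mem_comap]
    have : p.mkQ x = 0 := by
      rw [Submodule.mkQ_apply, Submodule.Quotient.mk_eq_zero]
      exact hx
    rw [this]
    exact Wb.zero_mem
  have key : ∀ L : Submodule k (Fin 5 → k), finrank k L = 2 →
      ∃ M : Submodule k ((Fin 5 → k) ⧸ p), finrank k M = 2 ∧
        ∀ Wb : Submodule k ((Fin 5 → k) ⧸ p), Wb ⊓ M ≠ ⊥ →
          (Wb.comap p.mkQ) ⊓ L ≠ ⊥ := by
    intro L hL
    by_cases hpL : p ⊓ L = ⊥
    · set f : L →ₗ[k] (Fin 5 → k) ⧸ p := p.mkQ ∘ₗ L.subtype with hf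
      have hker : LinearMap.ker f = ⊥ := by
        rw [hf, LinearMap.ker_comp, Submodule.ker_mkQ, eq_bot_iff]
        rintro x hx
        have hx2 : (x : Fin 5 → k) ∈ p ⊓ L := ⟨hx, x.2⟩
        rw [hpL, Submodule.mem_bot] at hx2
        rw [Submodule.mem_bot]
        exact Subtype.ext hx2
      refine ⟨LinearMap.range f, ?_, ?_⟩
      · have := f.finrank_range_add_finrank_ker
        rw [hker, finrank_bot] at this
        omega
      · intro Wb hne
        obtain ⟨x, ⟨hxW, hxM⟩, hx0⟩ := Submodule.exists_mem_ne_zero_of_ne_bot hne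
        obtain ⟨c, rfl⟩ := LinearMap.mem_range.1 hxM
        refine (Submodule.ne_bot_iff _).2 ⟨(c : Fin 5 → k), ⟨?_, c.2⟩, ?_⟩
        · exact Submodule.mem_comap.2 (show p.mkQ (c : Fin 5 → k) ∈ Wb from hxW)
        · intro h0
          apply hx0
          have : f c = p.mkQ (c : Fin 5 → k) := rfl
          rw [this, h0, map_zero]
    · -- here p ≤ L, and any plane through p meets L
      have hpleL : p ≤ L := by
        have hfin : 1 ≤ finrank k (p ⊓ L : Submodule k (Fin 5 → k)) := by
          rcases Nat.eq_zero_or_pos (finrank k (p ⊓ L : Submodule k (Fin 5 → k))) with h | h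
          · exact absurd (Submodule.finrank_eq_zero.1 h) hpL
          · exact h
        have : p ⊓ L = p := Submodule.eq_of_le_of_finrank_le inf_le_left (by omega)
        rw [← this]
        exact inf_le_right
      obtain ⟨M, -, hM⟩ := aux_extend 2 (⊥ : Submodule k ((Fin 5 → k) ⧸ p))
        (by rw [finrank_bot]; omega) (by omega)
      refine ⟨M, hM, fun Wb _ => ?_⟩
      intro hbot
      have hple : p ≤ Wb.comap p.mkQ ⊓ L := le_inf (hpW Wb) hpleL
      rw [hbot, le_bot_iff] at hple
      rw [hple, finrank_bot] at hp
      omega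
  obtain ⟨M1, hM1, k1⟩ := key L1 h1
  obtain ⟨M2, hM2, k2⟩ := key L2 h2
  obtain ⟨M3, hM3, k3⟩ := key L3 h3
  obtain ⟨M4, hM4, k4⟩ := key L4 h4
  obtain ⟨Wb, hWb, q1, q2, q3, q4⟩ := aux_four hQ M1 M2 M3 M4 hM1 hM2 hM3 hM4
  refine ⟨Wb.comap p.mkQ, ?_, hpW Wb, k1 Wb q1, k2 Wb q2, k3 Wb q3, k4 Wb q4⟩
  -- rank of the preimage is 2 + 1 = 3
  set f : (Wb.comap p.mkQ : Submodule k (Fin 5 → k)) →ₗ[k] (Fin 5 → k) ⧸ p :=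
    p.mkQ ∘ₗ (Wb.comap p.mkQ).subtype with hf
  have hrange : LinearMap.range f = Wb := by
    rw [hf, LinearMap.range_comp, Submodule.range_subtype,
      Submodule.map_comap_eq_of_surjective (Submodule.mkQ_surjective p)]
  have hker : LinearMap.ker f = Submodule.comap (Wb.comap p.mkQ).subtype p := by
    rw [hf, LinearMap.ker_comp, Submodule.ker_mkQ]
  have hkerrank : finrank k (LinearMap.ker f) = 1 := by
    rw [hker, ← Submodule.finrank_map_subtype_eq (Wb.comap p.mkQ), Submodule.map_comap_subtype]
    rw [inf_eq_right.2 (hpW Wb)]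
    exact hp
  have := f.finrank_range_add_finrank_ker
  rw [hrange, hkerrank, hWb] at this
  omega
end

section
/- Write vectors in R^11 as v = (h; f_1,…,f_5; g_1,…,g_5). Let S ⊂ R^11 be the set of all vectors obtained by permuting the indices {1,…,5} in the following five vectors: (0; 1,0,0,0,0; 0,0,0,0,0), (0; 1,0,0,0,0; 1,0,0,0,0), (1; 0,0,0,0,0; 0,0,0,0,0), (1; −1,−1,−1,−1,−1; 0,0,0,0,0), (1; −2,−1,−1,0,0; −1,0,0,0,0). Then the vector (2; −3,−3,−1,−1,−1; −1,−1,0,0,0) does not belong to the convex cone generated by S. -/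
open scoped NNReal

/-- Numerical classes of 2-cycles on the blowup of P^4 along 5 general lines,
written as vectors `(h; f₁,…,f₅; g₁,…,g₅)`. -/
abbrev CycleVec5 : Type := ℝ × (Fin 5 → ℝ) × (Fin 5 → ℝ)

/-- The action of a permutation of the indices `{1,…,5}` on a vector. -/
def permVec5 (σ : Equiv.Perm (Fin 5)) (v : CycleVec5) : CycleVec5 :=
  (v.1, v.2.1 ∘ σ, v.2.2 ∘ σ)

/-- The classes of linear 2-dimensional subvarieties: all index-permutations of the
five listed vectors. -/
def linClasses5 : Set CycleVec5 :=
  {w | ∃ σ : Equiv.Perm (Fin 5), w = permVec5 σ (0, ![1,0,0,0,0], ![0,0,0,0,0]) ∨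
    w = permVec5 σ (0, ![1,0,0,0,0], ![1,0,0,0,0]) ∨
    w = permVec5 σ (1, ![0,0,0,0,0], ![0,0,0,0,0]) ∨
    w = permVec5 σ (1, ![-1,-1,-1,-1,-1], ![0,0,0,0,0]) ∨
    w = permVec5 σ (1, ![-2,-1,-1,0,0], ![-1,0,0,0,0])}

/-
The linear functional `λ(h; f; g) = 5h + Σ fᵢ + Σ gᵢ` is invariant under permuting the
indices and takes the values `1, 2, 5, 0, 0` on the five generators, so it is nonnegative
on the whole cone they generate. On the class of the quadric it equals `10 - 9 - 2 = -1`.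
-/

theorem map_nonneg_of_mem_span_nnreal {M : Type*} [AddCommGroup M] [Module ℝ M]
    (φ : M →ₗ[ℝ] ℝ) {S : Set M} (hS : ∀ s ∈ S, 0 ≤ φ s) {v : M}
    (hv : v ∈ Submodule.span ℝ≥0 S) : 0 ≤ φ v := by
  induction hv using Submodule.span_induction with
  | mem s hs => exact hS s hs
  | zero => simp
  | add x y _ _ hx hy => rw [map_add]; exact add_nonneg hx hy
  | smul c x _ hx => rw [NNReal.smul_def, map_smul, smul_eq_mul]; exact mul_nonneg c.coe_nonneg hx

def separatingFunctional : CycleVec5 →ₗ[ℝ] ℝ where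
  toFun v := 5 * v.1 + ∑ i, v.2.1 i + ∑ i, v.2.2 i
  map_add' _ _ := by
    simp only [Prod.fst_add, Prod.snd_add, Pi.add_apply, Finset.sum_add_distrib]
    ring
  map_smul' _ _ := by
    simp only [Prod.smul_fst, Prod.smul_snd, Pi.smul_apply, smul_eq_mul, ← Finset.mul_sum,
      RingHom.id_apply]
    ring

lemma separatingFunctional_apply (v : CycleVec5) :
    separatingFunctional v = 5 * v.1 + ∑ i, v.2.1 i + ∑ i, v.2.2 i := rfl

lemma separatingFunctional_permVec5 (σ : Equiv.Perm (Fin 5)) (v : CycleVec5) :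
    separatingFunctional (permVec5 σ v) = separatingFunctional v := by
  simp only [separatingFunctional_apply, permVec5, Function.comp_apply, Equiv.sum_comp]

lemma separatingFunctional_nonneg_of_mem_linClasses5 {w : CycleVec5} (hw : w ∈ linClasses5) :
    0 ≤ separatingFunctional w := by
  obtain ⟨σ, rfl | rfl | rfl | rfl | rfl⟩ := hw <;>
    · rw [separatingFunctional_permVec5]
      norm_num [separatingFunctional_apply, Fin.sum_univ_succ]

/-- The class of the proper transform of a quadric surface containing two of the
five lines and meeting the other three is not in the convex cone generated by the
classes of linear 2-dimensional subvarieties: the cone of effective 2-cycles on the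
blowup of P^4 along 5 general lines is not linearly generated. -/
theorem stmt14 :
    ((2 : ℝ), ![-3,-3,-1,-1,-1], ![-1,-1,0,0,0]) ∉
      Submodule.span ℝ≥0 linClasses5 := by
  intro hmem
  have hnonneg := map_nonneg_of_mem_span_nnreal separatingFunctional
    (fun _ ↦ separatingFunctional_nonneg_of_mem_linClasses5) hmem
  have hquadric : separatingFunctional (2, ![-3,-3,-1,-1,-1], ![-1,-1,0,0,0]) = -1 := by
    norm_num [separatingFunctional_apply, Fin.sum_univ_succ]
  linarith
end
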